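/- If at some point of Re-Pair's execution on an input of length n the most frequent pair in the working string occurs at least z times, then the number of nonterminals introduced so far is less than n/z. -/

import Mathlib

/-!
Replacing a most frequent pair `ab` by a fresh symbol `x` creates no pair more frequent than `ab`
was: a pair avoiding `x` occurs no more often than before, and a pair containing `x` occurs at most
as often as `x`, that is, at most as often as `ab` did. So the maximal pair frequency never
increases, each of the `m` replacements made so far shortened the string by at least `z`, and the
current string, which still contains a pair, is nonempty: `n ≥ m z + 1`.
-/

/-- Number of non-overlapping occurrences (counted greedily left to right)
of the digram `ab` in a string. -/
def pairFreq {α : Type*} [DecidableEq α] (a b : α) : List α → ℕ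
  | x :: y :: rest =>
      if x = a ∧ y = b then 1 + pairFreq a b rest else pairFreq a b (y :: rest)
  | _ => 0

/-- Replace all (non-overlapping, leftmost-first) occurrences of the digram `ab`
by the fresh symbol `x`. -/
def replacePair {α : Type*} [DecidableEq α] (a b x : α) : List α → List α
  | u :: v :: rest =>
      if u = a ∧ v = b then x :: replacePair a b x rest
      else u :: replacePair a b x (v :: rest)
  | l => l

section RePair

variable {α : Type*} [DecidableEq α]

section PairFreq

lemma pairFreq_cons_of_ne {c d y : α} (hy : y ≠ c) (L : List α) :
    pairFreq c d (y :: L) = pairFreq c d L := by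
  cases L with
  | nil => rfl
  | cons u L => simp [pairFreq, hy]

lemma pairFreq_le_pairFreq_cons (c d y : α) (L : List α) :
    pairFreq c d L ≤ pairFreq c d (y :: L) := by
  induction L using List.twoStepInduction generalizing y with
  | nil => simp [pairFreq]
  | singleton u => simp [pairFreq]
  | cons_cons u v rest ih _ =>
    have := ih v
    simp only [pairFreq]
    split_ifs <;> omega

lemma pairFreq_le_count_left (c d : α) (L : List α) : pairFreq c d L ≤ L.count c := by
  fun_induction pairFreq c d L with
  | case1 u v rest h ih =>
    obtain ⟨rfl, rfl⟩ := h
    simp only [List.count_cons_self, List.count_cons]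
    omega
  | case2 u v rest _ ih => exact ih.trans (List.count_le_count_cons ..)
  | case3 => exact Nat.zero_le _

lemma pairFreq_le_count_right (c d : α) (L : List α) : pairFreq c d L ≤ L.count d := by
  fun_induction pairFreq c d L with
  | case1 u v rest h ih =>
    obtain ⟨rfl, rfl⟩ := h
    simp only [List.count_cons_self, List.count_cons]
    omega
  | case2 u v rest _ ih => exact ih.trans (List.count_le_count_cons ..)
  | case3 => exact Nat.zero_le _

lemma pairFreq_le_length (c d : α) (L : List α) : pairFreq c d L ≤ L.length :=
  (pairFreq_le_count_left c d L).trans (List.count_le_length ..)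

end PairFreq

section ReplacePair

lemma length_replacePair_add_pairFreq (a b x : α) (L : List α) :
    (replacePair a b x L).length + pairFreq a b L = L.length := by
  fun_induction replacePair a b x L with
  | case1 u v rest h ih => simp only [pairFreq, if_pos h, List.length_cons]; omega
  | case2 u v rest h ih => simp only [pairFreq, if_neg h, List.length_cons] at ih ⊢; omega
  | case3 L hL => cases L with
    | nil => rfl
    | cons u L => cases L with
      | nil => rfl
      | cons v L => exact (hL u v L rfl).elim

lemma count_replacePair_le (a b x : α) (L : List α) :
    (replacePair a b x L).count x ≤ pairFreq a b L + L.count x := by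
  fun_induction replacePair a b x L with
  | case1 u v rest h ih =>
    simp only [pairFreq, if_pos h, List.count_cons, beq_self_eq_true, if_true]
    omega
  | case2 u v rest h ih => simp only [pairFreq, if_neg h, List.count_cons] at ih ⊢; omega
  | case3 => omega

lemma replacePair_cons_eq_or (a b x v : α) (L : List α) :
    replacePair a b x (v :: L) = v :: replacePair a b x L ∨
      ∃ M, replacePair a b x (v :: L) = x :: M := by
  cases L with
  | nil => simp [replacePair]
  | cons w L => simp only [replacePair]; split_ifs <;> simp

lemma pairFreq_replacePair_le (a b x : α) {c d : α} (hc : c ≠ x) (hd : d ≠ x) (L : List α) :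
    pairFreq c d (replacePair a b x L) ≤ pairFreq c d L := by
  induction L using List.twoStepInduction with
  | nil => simp [replacePair]
  | singleton u => simp [replacePair]
  | cons_cons u v rest ih ih' =>
    by_cases hab : u = a ∧ v = b
    · rw [replacePair, if_pos hab, pairFreq_cons_of_ne hc.symm]
      calc pairFreq c d (replacePair a b x rest) ≤ pairFreq c d rest := ih
        _ ≤ pairFreq c d (u :: v :: rest) :=
          (pairFreq_le_pairFreq_cons c d v rest).trans (pairFreq_le_pairFreq_cons ..)
    rw [replacePair, if_neg hab]
    by_cases hu : u = c
    · subst hu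
      -- `v :: rest` keeps its head `v`, or gets head `x`, which cannot complete a pair `u d`
      rcases replacePair_cons_eq_or a b x v rest with hv | ⟨M, hxM⟩
      · have := ih' v
        rw [hv] at this ⊢
        simp only [pairFreq]
        split_ifs <;> omega
      · calc pairFreq u d (u :: replacePair a b x (v :: rest))
            = pairFreq u d (replacePair a b x (v :: rest)) := by
              rw [hxM, pairFreq, if_neg (fun h => hd h.2.symm)]
          _ ≤ pairFreq u d (v :: rest) := ih' v
          _ ≤ pairFreq u d (u :: v :: rest) := pairFreq_le_pairFreq_cons ..
    · rw [pairFreq_cons_of_ne hu, pairFreq_cons_of_ne hu]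
      exact ih' v

lemma pairFreq_replacePair_le_of_forall_le {a b x : α} {L : List α} (hx : x ∉ L)
    (hmax : ∀ c d, pairFreq c d L ≤ pairFreq a b L) (c d : α) :
    pairFreq c d (replacePair a b x L) ≤ pairFreq a b L := by
  have hcount : (replacePair a b x L).count x ≤ pairFreq a b L := by
    simpa [List.count_eq_zero_of_not_mem hx] using count_replacePair_le a b x L
  by_cases hc : c = x
  · subst hc
    exact (pairFreq_le_count_left ..).trans hcount
  by_cases hd : d = x
  · subst hd
    exact (pairFreq_le_count_right ..).trans hcount
  exact (pairFreq_replacePair_le a b x hc hd L).trans (hmax c d)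

end ReplacePair

def IsRePairStep (a b x : α) (L L' : List α) : Prop :=
  L' = replacePair a b x L ∧ x ∉ L ∧ ∀ c d, pairFreq c d L ≤ pairFreq a b L

namespace IsRePairStep

variable {a b x : α} {L L' : List α}

lemma pairFreq_le (h : IsRePairStep a b x L L') (c d : α) :
    pairFreq c d L' ≤ pairFreq a b L :=
  h.1 ▸ pairFreq_replacePair_le_of_forall_le h.2.1 h.2.2 c d

lemma length_add_pairFreq (h : IsRePairStep a b x L L') :
    L'.length + pairFreq a b L = L.length :=
  h.1 ▸ length_replacePair_add_pairFreq a b x L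

end IsRePairStep

section Run

variable {T : ℕ → List α} {a b x : ℕ → α} {m z : ℕ}

lemma exists_le_pairFreq_of_isRePairStep
    (hstep : ∀ i < m, IsRePairStep (a i) (b i) (x i) (T i) (T (i + 1)))
    (hfreq : ∃ c d, z ≤ pairFreq c d (T m)) {i : ℕ} (hi : i ≤ m) :
    ∃ c d, z ≤ pairFreq c d (T i) := by
  induction hi using Nat.decreasingInduction with
  | self => exact hfreq
  | of_succ k hk ih =>
    obtain ⟨c, d, h⟩ := ih
    exact ⟨a k, b k, h.trans ((hstep k hk).pairFreq_le c d)⟩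

lemma le_pairFreq_of_isRePairStep
    (hstep : ∀ i < m, IsRePairStep (a i) (b i) (x i) (T i) (T (i + 1)))
    (hfreq : ∃ c d, z ≤ pairFreq c d (T m)) {i : ℕ} (hi : i < m) :
    z ≤ pairFreq (a i) (b i) (T i) := by
  obtain ⟨c, d, h⟩ := exists_le_pairFreq_of_isRePairStep hstep hfreq hi.le
  exact h.trans ((hstep i hi).2.2 c d)

lemma length_add_mul_le_of_isRePairStep
    (hstep : ∀ i < m, IsRePairStep (a i) (b i) (x i) (T i) (T (i + 1)))
    (hz : ∀ i < m, z ≤ pairFreq (a i) (b i) (T i)) :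
    (T m).length + m * z ≤ (T 0).length := by
  induction m with
  | zero => simp
  | succ k ih =>
    have hk := ih (fun i hi => hstep i (by omega)) (fun i hi => hz i (by omega))
    have hshrink := (hstep k k.lt_succ_self).length_add_pairFreq
    have hzk := hz k k.lt_succ_self
    rw [Nat.succ_mul]
    omega

end Run

end RePair

/-- After `m` steps of Re-Pair (so `m` nonterminals introduced), if the most frequent
pair of the working string occurs at least `z` times, then `m < n / z`. -/
theorem stmt13 {α : Type*} [DecidableEq α] (S : List α) (n : ℕ) (hn : n = S.length)
    (m : ℕ) (T : ℕ → List α) (a b x : ℕ → α)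
    (h0 : T 0 = S)
    (hstep : ∀ i < m,
      T (i + 1) = replacePair (a i) (b i) (x i) (T i) ∧
      x i ∉ T i ∧
      (∀ c d, pairFreq c d (T i) ≤ pairFreq (a i) (b i) (T i)))
    (z : ℕ) (hz : 0 < z) (hfreq : ∃ c d, z ≤ pairFreq c d (T m)) :
    (m : ℝ) < (n : ℝ) / (z : ℝ) := by
  have hrun : ∀ i < m, IsRePairStep (a i) (b i) (x i) (T i) (T (i + 1)) := hstep
  have hlen : (T m).length + m * z ≤ S.length :=
    h0 ▸ length_add_mul_le_of_isRePairStep hrun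
      fun i hi => le_pairFreq_of_isRePairStep hrun hfreq hi
  have hne : 0 < (T m).length := by
    obtain ⟨c, d, hcd⟩ := hfreq
    exact hz.trans_le (hcd.trans (pairFreq_le_length c d (T m)))
  rw [lt_div_iff₀ (by exact_mod_cast hz), hn]
  exact_mod_cast (by omega : m * z < S.length)
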